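/- arXiv:2512.03765 — 3 statements merged into one kernel-verified Lean document; each statement's English description precedes it below -/
import Mathlib

section
/- Flow completeness for a single domain: for any domain d : D, the net change of the balance at d over a list of events is determined only by the events involving d; precisely, if L and L' are lists of treasury events (each with src ≠ dst) such that the multiset of events e ∈ L with e.src = d or e.dst = d equals the corresponding multiset for L', then for every initial balance vector B : D → ℤ, the final balances at d after folding step over L and over L' are equal. -/
/-- A treasury event: a transfer of value `v` from domain `src` to domain `dst`. -/
structure Event (D : Type*) where
  src : D
  dst : D
  v : ℤ

/-- Balance-update rule: processing event `e` subtracts `e.v` from the source domain,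
adds `e.v` to the destination domain, and leaves all other domains unchanged. -/
def step {D : Type*} [DecidableEq D] (B : D → ℤ) (e : Event D) : D → ℤ :=
  fun d => if d = e.src then B d - e.v else if d = e.dst then B d + e.v else B d

/-! Processing `e` changes the balance at `d` by `netFlow d e` whatever the balances are, so
the final balance at `d` is the initial one plus the sum of `netFlow d` over the events; the
events not involving `d` contribute nothing to that sum. -/

theorem List.sum_map_filter_of_eq_zero {α M : Type*} [AddCommMonoid M] (p : α → Bool)
    (f : α → M) (hf : ∀ a, p a = false → f a = 0) (l : List α) :
    ((l.filter p).map f).sum = (l.map f).sum := by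
  induction l with
  | nil => rfl
  | cons a l ih =>
    cases hp : p a
    · simp [hp, hf a hp, ih]
    · simp [hp, ih]

section Treasury

variable {D : Type*} [DecidableEq D]

def netFlow (d : D) (e : Event D) : ℤ :=
  if d = e.src then -e.v else if d = e.dst then e.v else 0

theorem step_apply (B : D → ℤ) (e : Event D) (d : D) : step B e d = B d + netFlow d e := by
  unfold step netFlow
  split_ifs <;> ring

theorem foldl_step_apply (L : List (Event D)) (B : D → ℤ) (d : D) :
    (L.foldl step B) d = B d + (L.map (netFlow d)).sum := by
  induction L generalizing B with
  | nil => simp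
  | cons e L ih => simp only [List.foldl_cons, ih, step_apply, List.map_cons, List.sum_cons]; ring

theorem netFlow_eq_zero_of_not_involved {d : D} {e : Event D} (h : ¬(e.src = d ∨ e.dst = d)) :
    netFlow d e = 0 := by
  obtain ⟨hsrc, hdst⟩ := not_or.mp h
  simp [netFlow, Ne.symm hsrc, Ne.symm hdst]

theorem sum_map_netFlow_filter_involved (d : D) (L : List (Event D)) :
    ((L.filter (fun e => decide (e.src = d ∨ e.dst = d))).map (netFlow d)).sum
      = (L.map (netFlow d)).sum :=
  L.sum_map_filter_of_eq_zero _ _ fun _ he => netFlow_eq_zero_of_not_involved (by simpa using he)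

end Treasury

theorem flow_completeness_single_domain_general {D : Type*} [DecidableEq D]
    (d : D) (L L' : List (Event D))
    (hmulti :
      ((L.filter (fun e => decide (e.src = d ∨ e.dst = d))) : Multiset (Event D))
        = ((L'.filter (fun e => decide (e.src = d ∨ e.dst = d))) : Multiset (Event D))) :
    ∀ B : D → ℤ, (L.foldl step B) d = (L'.foldl step B) d := by
  intro B
  have hsum := congrArg (fun m : Multiset (Event D) => (m.map (netFlow d)).sum) hmulti
  simp only [Multiset.map_coe, Multiset.sum_coe, sum_map_netFlow_filter_involved] at hsum
  rw [foldl_step_apply, foldl_step_apply, hsum]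

/-- Flow completeness for a single domain: the net change at a domain `d` is determined
only by the multiset of events whose source or destination is `d`. -/
theorem flow_completeness_single_domain {D : Type*} [DecidableEq D]
    (d : D) (L L' : List (Event D))
    (hL : ∀ e ∈ L, e.src ≠ e.dst)
    (hL' : ∀ e ∈ L', e.src ≠ e.dst)
    (hmulti :
      ((L.filter (fun e => decide (e.src = d ∨ e.dst = d))) : Multiset (Event D))
        = ((L'.filter (fun e => decide (e.src = d ∨ e.dst = d))) : Multiset (Event D))) :
    ∀ B : D → ℤ, (L.foldl step B) d = (L'.foldl step B) d :=
  flow_completeness_single_domain_general d L L' hmulti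
end

section
/- Exposure determination on closed domain sets: let D₀ be a set of domains with dfee ∉ D₀, and let L be a finite list of treasury events (each with src ≠ dst) that is closed for D₀, meaning every event e ∈ L whose source or destination lies in D₀ has both source and destination in D₀ ∪ {dfee}. Then the balance vector B' obtained by folding step over L from B satisfies ∑_{d ∈ D₀} B' d = ∑_{d ∈ D₀} B d + (∑ over e ∈ L with e.src = dfee and e.dst ∈ D₀ of e.v) − (∑ over e ∈ L with e.src ∈ D₀ and e.dst = dfee of e.v); in particular the total exposure of D₀ is determined by its initial total and the net flow exchanged with the fee domain. -/
theorem List.sum_map_sub {ι G : Type*} [AddCommGroup G] (l : List ι) (f g : ι → G) :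
    (l.map fun i => f i - g i).sum = (l.map f).sum - (l.map g).sum := by
  simpa using Multiset.sum_map_sub (m := (l : Multiset ι)) (f := f) (g := g)

theorem List.sum_map_ite_zero {ι M : Type*} [AddCommMonoid M] (p : ι → Prop) [DecidablePred p]
    (f : ι → M) (l : List ι) :
    (l.map fun i => if p i then f i else 0).sum = ((l.filter p).map f).sum := by
  simp [List.sum_map_ite]

namespace Event

variable {D : Type*} [DecidableEq D]

def netInflow (s : Finset D) (e : Event D) : ℤ :=
  (if e.dst ∈ s then e.v else 0) - (if e.src ∈ s then e.v else 0)

theorem netInflow_eq_of_closed {dfee : D} {s : Finset D} (hfee : dfee ∉ s) {e : Event D}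
    (hclosed : (e.src ∈ s ∨ e.dst ∈ s) →
      (e.src ∈ s ∨ e.src = dfee) ∧ (e.dst ∈ s ∨ e.dst = dfee)) :
    e.netInflow s = (if e.src = dfee ∧ e.dst ∈ s then e.v else 0)
      - (if e.src ∈ s ∧ e.dst = dfee then e.v else 0) := by
  have hne : ∀ {d}, d ∈ s → d ≠ dfee := fun hd h => hfee (h ▸ hd)
  unfold netInflow
  by_cases hs : e.src ∈ s <;> by_cases hd : e.dst ∈ s
  · simp [hs, hd, hne hs, hne hd]
  · simp [hs, hfee, (hclosed (.inl hs)).2.resolve_left hd]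
  · simp [hd, hfee, (hclosed (.inr hd)).1.resolve_left hs]
  · simp [hs, hd]

end Event

open Event

section

variable {D : Type*} [DecidableEq D]

theorem step_eq_of_src_ne_dst (B : D → ℤ) {e : Event D} (he : e.src ≠ e.dst) :
    step B e = B + Pi.single e.dst e.v - Pi.single e.src e.v := by
  ext d
  by_cases hs : d = e.src
  · subst hs; simp [step, he]
  · by_cases hd : d = e.dst
    · subst hd; simp [step, hs]
    · simp [step, hs, hd]

theorem sum_step_of_src_ne_dst (s : Finset D) (B : D → ℤ) {e : Event D} (he : e.src ≠ e.dst) :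
    ∑ d ∈ s, step B e d = ∑ d ∈ s, B d + e.netInflow s := by
  simp only [step_eq_of_src_ne_dst B he, Pi.sub_apply, Pi.add_apply, Finset.sum_sub_distrib,
    Finset.sum_add_distrib, Finset.sum_pi_single', netInflow]
  ring

theorem sum_foldl_step (s : Finset D) (B : D → ℤ) {L : List (Event D)}
    (hL : ∀ e ∈ L, e.src ≠ e.dst) :
    ∑ d ∈ s, L.foldl step B d = ∑ d ∈ s, B d + (L.map (netInflow s)).sum := by
  induction L generalizing B with
  | nil => simp
  | cons e L ih =>
    rw [List.foldl_cons, ih _ fun x hx => hL x (List.mem_cons_of_mem _ hx),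
      sum_step_of_src_ne_dst s B (hL e List.mem_cons_self), List.map_cons, List.sum_cons]
    ring

end

theorem exposure_on_closed_domains_general {D : Type*} [DecidableEq D]
    (dfee : D) (D₀ : Finset D) (hfee : dfee ∉ D₀)
    (B : D → ℤ) (L : List (Event D))
    (hL : ∀ e ∈ L, e.src ≠ e.dst)
    (hclosed : ∀ e ∈ L, (e.src ∈ D₀ ∨ e.dst ∈ D₀) →
      (e.src ∈ D₀ ∨ e.src = dfee) ∧ (e.dst ∈ D₀ ∨ e.dst = dfee)) :
    ∑ d ∈ D₀, (L.foldl step B) d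
      = ∑ d ∈ D₀, B d
        + ((L.filter (fun e => decide (e.src = dfee ∧ e.dst ∈ D₀))).map Event.v).sum
        - ((L.filter (fun e => decide (e.src ∈ D₀ ∧ e.dst = dfee))).map Event.v).sum := by
  rw [sum_foldl_step D₀ B hL,
    List.map_congr_left fun e he => netInflow_eq_of_closed hfee (hclosed e he),
    List.sum_map_sub, List.sum_map_ite_zero, List.sum_map_ite_zero]
  ring

/-- Exposure determination on closed domain sets: if `D₀` (not containing the fee domain)
is closed for the event list `L`, then the total exposure of `D₀` after folding `step`
over `L` equals its initial total plus the net flow exchanged with the fee domain. -/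
theorem exposure_on_closed_domains {D : Type*} [Fintype D] [DecidableEq D]
    (dfee : D) (D₀ : Finset D) (hfee : dfee ∉ D₀)
    (B : D → ℤ) (L : List (Event D))
    (hL : ∀ e ∈ L, e.src ≠ e.dst)
    (hclosed : ∀ e ∈ L, (e.src ∈ D₀ ∨ e.dst ∈ D₀) →
      (e.src ∈ D₀ ∨ e.src = dfee) ∧ (e.dst ∈ D₀ ∨ e.dst = dfee)) :
    ∑ d ∈ D₀, (L.foldl step B) d
      = ∑ d ∈ D₀, B d
        + ((L.filter (fun e => decide (e.src = dfee ∧ e.dst ∈ D₀))).map Event.v).sum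
        - ((L.filter (fun e => decide (e.src ∈ D₀ ∧ e.dst = dfee))).map Event.v).sum :=
  exposure_on_closed_domains_general dfee D₀ hfee B L hL hclosed
end

section
/- Collision extraction from equivocating hash chains: let enc : β × R → α be injective and H : α → β arbitrary, and let rs and rs' be record lists of equal length ℓ ≥ 1 with seeds R₀ and R₀' respectively. If the final chain values coincide, chain R₀ rs = chain R₀' rs', but (R₀, rs) ≠ (R₀', rs'), then there exist x ≠ x' in α with H x = H x', i.e. a collision in H. Equivalently, if H is injective then the map (R₀, rs) ↦ chain R₀ rs is injective on pairs of a seed and a record list of any fixed positive length. -/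
/-- The hash chain of a record list: `chain H enc R₀ [rec₁, …, rec_ℓ]` is the final
value `R_ℓ` where `R_i = H (enc (R_{i-1}, rec_i))`, and `chain H enc R₀ [] = R₀`. -/
def chain {α β R : Type*} (H : α → β) (enc : β × R → α) : β → List R → β
  | R0, [] => R0
  | R0, r :: rs => chain H enc (H (enc (R0, r))) rs

/-- Collision extraction from equivocating hash chains: if two seed/record-list pairs of
the same positive length yield the same final chain value but are distinct, then the
hash function `H` has a collision. -/
theorem collision_from_equivocation {α β R : Type*}
    (H : α → β) (enc : β × R → α) (henc : Function.Injective enc)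
    (R₀ R₀' : β) (rs rs' : List R)
    (hlen : rs.length = rs'.length) (hpos : 1 ≤ rs.length)
    (hchain : chain H enc R₀ rs = chain H enc R₀' rs')
    (hne : (R₀, rs) ≠ (R₀', rs')) :
    ∃ x x' : α, x ≠ x' ∧ H x = H x' := by
  induction rs generalizing rs' R₀ R₀' with
  | nil => simp at hpos
  | cons r t ih =>
    cases rs' with
    | nil => simp at hlen
    | cons r' t' =>
      simp only [List.length_cons, Nat.add_right_cancel_iff] at hlen
      by_cases h : H (enc (R₀, r)) = H (enc (R₀', r')) ∧ t = t'
      · refine ⟨enc (R₀, r), enc (R₀', r'), ?_, h.1⟩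
        intro heq
        have := henc heq
        simp only [Prod.mk.injEq] at this
        exact hne (by simp [this.1, this.2, h.2])
      · cases t with
        | nil =>
          cases t'
          · exact absurd ⟨hchain, rfl⟩ h
          · simp at hlen
        | cons a u =>
          refine ih _ _ _ hlen (by simp) hchain ?_
          intro heq
          simp only [Prod.mk.injEq] at heq
          exact h ⟨heq.1, heq.2⟩
end
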